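/- Let α ∈ (0,1) and λ ∈ ℝ. Then for all t ∈ (a,b], the left ψ-Caputo derivative of the function t ↦ E_α(λ(ψ(t) − ψ(a))^α) satisfies ^CD_{a+}^{α,ψ}[E_α(λ(ψ(·) − ψ(a))^α)](t) = λ · E_α(λ(ψ(t) − ψ(a))^α). -/

import Mathlib

open Real Set

/-- The left ψ-Caputo fractional derivative of order `α ∈ (0,1)`. -/
noncomputable def psiCaputoLeft (a α : ℝ) (ψ x : ℝ → ℝ) (t : ℝ) : ℝ :=
  (1 / Real.Gamma (1 - α)) * ∫ τ in a..t, (ψ t - ψ τ) ^ (-α) * deriv x τ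

/-- The (real) Mittag-Leffler function `E_α(z) = Σ_{k=0}^∞ z^k / Γ(αk+1)`. -/
noncomputable def mittagLeffler (α z : ℝ) : ℝ :=
  ∑' k : ℕ, z ^ k / Real.Gamma (α * k + 1)

/-!
Substituting `u = ψ τ - ψ a` turns the ψ-Caputo derivative into the ordinary Caputo derivative of
`u ↦ E_α(λ u^α)` at `U = ψ t - ψ a`. Differentiating the series termwise gives
`∑ λ^(k+1) u^(α(k+1)-1) / Γ(α(k+1))`, and integrating each term against the kernel `(U - u)^(-α)`
is a Beta integral, equal to `Γ(1-α) λ^(k+1) U^(αk) / Γ(αk+1)`; summing gives `Γ(1-α) λ E_α(λ U^α)`.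
Termwise differentiation and integration are justified by the convergence of
`∑ r^k / Γ(αk + β)`, which follows from the ratio test and the log-convexity bound
`Γ(x + 1) ≤ Γ(x + α) (x + α)^(1-α)`.
-/

open Filter Topology MeasureTheory

theorem integral_tsum_mul_of_nonneg {X ι : Type*} [MeasurableSpace X] [Countable ι]
    {μ : Measure X} {c : ι → ℝ} {B : ι → X → ℝ} (hB : ∀ k, 0 ≤ᵐ[μ] B k)
    (hBi : ∀ k, Integrable (B k) μ) (hs : Summable fun k => |c k| * ∫ x, B k x ∂μ) :
    ∫ x, ∑' k, c k * B k x ∂μ = ∑' k, c k * ∫ x, B k x ∂μ := by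
  have hnorm : ∀ k, ∫ x, ‖c k * B k x‖ ∂μ = |c k| * ∫ x, B k x ∂μ := fun k => by
    rw [← integral_const_mul]
    refine integral_congr_ae ((hB k).mono fun x hx => ?_)
    simp [abs_of_nonneg hx]
  rw [← integral_tsum_of_summable_integral_norm (fun k => (hBi k).const_mul (c k))
    (by simpa only [hnorm] using hs)]
  simp_rw [integral_const_mul]

theorem integral_rpow_mul_sub_rpow {p q U : ℝ} (hp : 0 < p) (hq : 0 < q) (hU : 0 < U) :
    ∫ u in 0..U, u ^ (p - 1) * (U - u) ^ (q - 1) =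
      Gamma p * Gamma q / Gamma (p + q) * U ^ (p + q - 1) := by
  have h := Complex.betaIntegral_scaled p q hU
  rw [Complex.betaIntegral_eq_Gamma_mul_div _ _ (by simpa) (by simpa)] at h
  have hreal : ∫ x in 0..U, (x : ℂ) ^ ((p : ℂ) - 1) * ((U : ℂ) - x) ^ ((q : ℂ) - 1) =
      ((∫ u in 0..U, u ^ (p - 1) * (U - u) ^ (q - 1) : ℝ) : ℂ) := by
    rw [← intervalIntegral.integral_ofReal]
    refine intervalIntegral.integral_congr fun x hx => ?_
    rw [uIcc_of_le hU.le] at hx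
    push_cast [Complex.ofReal_cpow hx.1, Complex.ofReal_cpow (sub_nonneg.2 hx.2)]
    rfl
  rw [hreal] at h
  have hcast : ((∫ u in 0..U, u ^ (p - 1) * (U - u) ^ (q - 1) : ℝ) : ℂ) =
      ((Gamma p * Gamma q / Gamma (p + q) * U ^ (p + q - 1) : ℝ) : ℂ) := by
    rw [h, ← Complex.ofReal_add, Complex.Gamma_ofReal, Complex.Gamma_ofReal, Complex.Gamma_ofReal]
    push_cast [Complex.ofReal_cpow hU.le, Complex.Gamma_ofReal]
    ring
  exact_mod_cast hcast

theorem intervalIntegrable_rpow_mul_sub_rpow {p q U : ℝ} (hp : 0 < p) (hq : 0 < q) (hU : 0 < U) :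
    IntervalIntegrable (fun u => u ^ (p - 1) * (U - u) ^ (q - 1)) volume 0 U := by
  -- A non-integrable function would have integral `0`.
  refine intervalIntegral.intervalIntegrable_of_integral_ne_zero ?_
  rw [integral_rpow_mul_sub_rpow hp hq hU]
  have := Gamma_pos_of_pos hp
  have := Gamma_pos_of_pos hq
  have := Gamma_pos_of_pos (add_pos hp hq)
  positivity

section

variable {α : ℝ}

theorem Real.Gamma_add_one_le_Gamma_add_mul_rpow (hα0 : 0 < α) (hα1 : α < 1) {x : ℝ}
    (hx : 0 < x) : Gamma (x + 1) ≤ Gamma (x + α) * (x + α) ^ (1 - α) := by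
  have hxα : 0 < x + α := by linarith
  have h := Gamma_mul_add_mul_le_rpow_Gamma_mul_rpow_Gamma hxα (by linarith : 0 < x + α + 1)
    hα0 (sub_pos.2 hα1) (add_sub_cancel α 1)
  rwa [show α * (x + α) + (1 - α) * (x + α + 1) = x + 1 by ring, Gamma_add_one hxα.ne',
    mul_rpow hxα.le (Gamma_pos_of_pos hxα).le, mul_left_comm, ← rpow_add (Gamma_pos_of_pos hxα),
    add_sub_cancel, rpow_one, mul_comm] at h

theorem Real.tendsto_Gamma_div_Gamma_add_atTop (hα0 : 0 < α) (hα1 : α < 1) :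
    Tendsto (fun x => Gamma x / Gamma (x + α)) atTop (𝓝 0) := by
  have hpow : Tendsto (fun x : ℝ => (x + α) ^ (-α)) atTop (𝓝 0) :=
    (tendsto_rpow_neg_atTop hα0).comp (tendsto_atTop_add_const_right _ α tendsto_id)
  have hratio : Tendsto (fun x : ℝ => 1 + α / x) atTop (𝓝 1) := by
    simpa using (tendsto_const_nhds (x := (1 : ℝ))).add
      (tendsto_const_nhds.div_atTop tendsto_id)
  refine squeeze_zero' ?_ ?_ (by simpa using hpow.mul hratio)
  · filter_upwards [eventually_gt_atTop 0] with x hx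
    exact div_nonneg (Gamma_pos_of_pos hx).le (Gamma_pos_of_pos (by linarith)).le
  · filter_upwards [eventually_gt_atTop 0] with x hx
    have hxα : 0 < x + α := by linarith
    have h := Gamma_add_one_le_Gamma_add_mul_rpow hα0 hα1 hx
    rw [Gamma_add_one hx.ne'] at h
    have hrhs : (x + α) ^ (-α) * (1 + α / x) * Gamma (x + α) =
        Gamma (x + α) * (x + α) ^ (1 - α) / x := by
      rw [sub_eq_neg_add, rpow_add_one hxα.ne']
      field_simp
    rw [div_le_iff₀ (Gamma_pos_of_pos hxα), hrhs, le_div_iff₀ hx]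
    linarith

theorem summable_pow_div_Gamma (hα0 : 0 < α) (hα1 : α < 1) {β : ℝ} (hβ : 0 < β) (r : ℝ) :
    Summable fun k : ℕ => r ^ k / Gamma (α * k + β) := by
  refine summable_of_ratio_norm_eventually_le one_half_lt_one ?_
  have hlim : Tendsto (fun k : ℕ => |r| * (Gamma (α * k + β) / Gamma (α * k + β + α)))
      atTop (𝓝 0) := by
    simpa using ((tendsto_Gamma_div_Gamma_add_atTop hα0 hα1).comp
      (tendsto_atTop_add_const_right _ β
        (tendsto_natCast_atTop_atTop.const_mul_atTop hα0))).const_mul |r|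
  filter_upwards [hlim.eventually (ge_mem_nhds one_half_pos)] with k hk
  have hΓ : 0 < Gamma (α * k + β) := Gamma_pos_of_pos (by positivity)
  have hΓ' : 0 < Gamma (α * k + β + α) := Gamma_pos_of_pos (by positivity)
  simp only [norm_div, norm_pow, Real.norm_eq_abs]
  rw [abs_of_pos hΓ, Nat.cast_succ, show α * (k + 1) + β = α * k + β + α by ring, abs_of_pos hΓ']
  calc |r| ^ (k + 1) / Gamma (α * k + β + α)
      = |r| * (Gamma (α * k + β) / Gamma (α * k + β + α)) * (|r| ^ k / Gamma (α * k + β)) := by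
        field_simp; ring
    _ ≤ 1 / 2 * (|r| ^ k / Gamma (α * k + β)) := by gcongr

theorem hasDerivAt_mittagLeffler (hα0 : 0 < α) (hα1 : α < 1) (z : ℝ) :
    HasDerivAt (mittagLeffler α) (∑' k : ℕ, (k + 1) * z ^ k / Gamma (α * (k + 1) + 1)) z := by
  -- Splitting off the constant term avoids the truncated exponent `k - 1` of `d/dy y ^ k`.
  have hshift : mittagLeffler α = fun y => 1 + ∑' k : ℕ, y ^ (k + 1) / Gamma (α * (k + 1) + 1) := by
    funext y
    rw [mittagLeffler, (summable_pow_div_Gamma hα0 hα1 one_pos y).tsum_eq_zero_add]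
    simp
  set R := |z| + 1
  have hbound : Summable fun k : ℕ => (2 * R) ^ k / Gamma (α * (k + 1) + 1) := by
    simpa only [mul_add, mul_one, add_assoc] using
      summable_pow_div_Gamma hα0 hα1 (by positivity : 0 < α + 1) (2 * R)
  rw [hshift]
  refine (hasDerivAt_tsum_of_isPreconnected (t := Metric.ball 0 R)
    (g := fun (k : ℕ) y => y ^ (k + 1) / Gamma (α * (k + 1) + 1))
    (g' := fun (k : ℕ) y => (k + 1) * y ^ k / Gamma (α * (k + 1) + 1)) hbound Metric.isOpen_ball
    (convex_ball 0 R).isPreconnected (fun k y _ => ?_) (fun k y hy => ?_)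
    (Metric.mem_ball_self (by positivity)) (by simp) ?_).const_add 1
  · simpa using (hasDerivAt_pow (k + 1) y).div_const (Gamma (α * (k + 1) + 1))
  · have hΓ : 0 < Gamma (α * (k + 1) + 1) := Gamma_pos_of_pos (by positivity)
    rw [mem_ball_zero_iff, Real.norm_eq_abs] at hy
    rw [norm_div, Real.norm_of_nonneg hΓ.le, norm_mul, norm_pow, Real.norm_eq_abs,
      Real.norm_eq_abs, mul_pow]
    gcongr
    exact_mod_cast Nat.lt_two_pow_self
  · simp [R]

theorem hasDerivAt_mittagLeffler_mul_rpow (hα0 : 0 < α) (hα1 : α < 1) (lam : ℝ) {u : ℝ}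
    (hu : 0 < u) :
    HasDerivAt (fun u => mittagLeffler α (lam * u ^ α))
      (∑' k : ℕ, lam ^ (k + 1) * u ^ (α * (k + 1) - 1) / Gamma (α * (k + 1))) u := by
  refine ((hasDerivAt_mittagLeffler hα0 hα1 (lam * u ^ α)).comp u
    ((hasDerivAt_rpow_const (Or.inl hu.ne')).const_mul lam)).congr_deriv ?_
  rw [← tsum_mul_right]
  congr 1
  funext k
  have hk : 0 < α * (k + 1) := by positivity
  rw [Gamma_add_one hk.ne', mul_pow, ← rpow_natCast (u ^ α), ← rpow_mul hu.le,
    show α * (k + 1) - 1 = α * k + (α - 1) by ring, rpow_add hu]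
  field_simp
  ring

theorem integral_sub_rpow_neg_mul_tsum (hα0 : 0 < α) (hα1 : α < 1) (lam : ℝ) {U : ℝ}
    (hU : 0 < U) :
    ∫ u in 0..U, (U - u) ^ (-α) *
        ∑' k : ℕ, lam ^ (k + 1) * u ^ (α * (k + 1) - 1) / Gamma (α * (k + 1)) =
      Gamma (1 - α) * lam * mittagLeffler α (lam * U ^ α) := by
  have hq : 0 < 1 - α := sub_pos.2 hα1
  have hp (k : ℕ) : 0 < α * (k + 1) := by positivity
  set B : ℕ → ℝ → ℝ := fun k u => u ^ (α * (k + 1) - 1) * (U - u) ^ (-α)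
  have hBint (k : ℕ) : ∫ u in 0..U, B k u =
      Gamma (α * (k + 1)) * Gamma (1 - α) / Gamma (α * k + 1) * (U ^ α) ^ k := by
    have h := integral_rpow_mul_sub_rpow (hp k) hq hU
    rw [sub_sub_cancel_left] at h
    rw [h, ← rpow_natCast, ← rpow_mul hU.le, show α * (k + 1) + (1 - α) = α * k + 1 by ring,
      add_sub_cancel_right]
  have hBi (k : ℕ) : IntervalIntegrable (B k) volume 0 U := by
    have h := intervalIntegrable_rpow_mul_sub_rpow (hp k) hq hU
    rwa [sub_sub_cancel_left] at h
  have hB (k : ℕ) : 0 ≤ᵐ[volume.restrict (Ioc 0 U)] B k :=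
    (ae_restrict_mem measurableSet_Ioc).mono fun u hu =>
      mul_nonneg (rpow_nonneg hu.1.le _) (rpow_nonneg (sub_nonneg.2 hu.2) _)
  have hΓ (k : ℕ) : 0 < Gamma (α * (k + 1)) := Gamma_pos_of_pos (hp k)
  have hs : Summable fun k : ℕ => |lam ^ (k + 1) / Gamma (α * (k + 1))| *
      ∫ u in Ioc 0 U, B k u := by
    refine ((summable_pow_div_Gamma hα0 hα1 one_pos (|lam| * U ^ α)).mul_left
      (|lam| * Gamma (1 - α))).congr fun k => ?_
    rw [← intervalIntegral.integral_of_le hU.le, hBint, abs_div, abs_pow, abs_of_pos (hΓ k)]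
    field_simp
    ring
  rw [intervalIntegral.integral_of_le hU.le]
  calc ∫ u in Ioc 0 U, (U - u) ^ (-α) *
        ∑' k : ℕ, lam ^ (k + 1) * u ^ (α * (k + 1) - 1) / Gamma (α * (k + 1))
      = ∫ u in Ioc 0 U, ∑' k : ℕ, lam ^ (k + 1) / Gamma (α * (k + 1)) * B k u := by
        congr 1
        funext u
        rw [← tsum_mul_left]
        congr 1
        funext k
        ring
    _ = ∑' k : ℕ, lam ^ (k + 1) / Gamma (α * (k + 1)) * ∫ u in Ioc 0 U, B k u :=
        integral_tsum_mul_of_nonneg hB (fun k => (hBi k).1) hs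
    _ = ∑' k : ℕ, Gamma (1 - α) * lam * ((lam * U ^ α) ^ k / Gamma (α * k + 1)) := by
        refine tsum_congr fun k => ?_
        rw [← intervalIntegral.integral_of_le hU.le, hBint]
        field_simp
        ring
    _ = Gamma (1 - α) * lam * mittagLeffler α (lam * U ^ α) := by
        rw [tsum_mul_left, mittagLeffler]

end

theorem psiCaputoLeft_comp_sub {a t α : ℝ} {ψ w w' : ℝ → ℝ} (hat : a ≤ t)
    (hψc : ContinuousOn ψ (Icc a t)) (hψd : DifferentiableOn ℝ ψ (Ioo a t))
    (hmono : StrictMonoOn ψ (Icc a t)) (hw : ∀ u, 0 < u → HasDerivAt w (w' u) u) :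
    psiCaputoLeft a α ψ (fun s => w (ψ s - ψ a)) t =
      1 / Gamma (1 - α) * ∫ u in 0..(ψ t - ψ a), (ψ t - ψ a - u) ^ (-α) * w' u := by
  have hψ_deriv (τ : ℝ) (hτ : τ ∈ Ioo a t) : HasDerivAt ψ (deriv ψ τ) τ :=
    (hψd.differentiableAt (isOpen_Ioo.mem_nhds hτ)).hasDerivAt
  have hsub := intervalIntegral.integral_comp_mul_deriv_of_deriv_nonneg (f := fun s => ψ s - ψ a)
    (f' := deriv ψ) (g := fun u => (ψ t - ψ a - u) ^ (-α) * w' u)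
    (by rw [uIcc_of_le hat]; exact hψc.sub continuousOn_const)
    (fun τ hτ => by
      rw [min_eq_left hat, max_eq_right hat] at hτ
      exact (hψ_deriv τ hτ).sub_const _)
    (fun τ hτ => by
      rw [min_eq_left hat, max_eq_right hat] at hτ
      exact hmono.monotoneOn.derivWithin_nonneg.trans_eq
        (derivWithin_of_mem_nhds (Icc_mem_nhds hτ.1 hτ.2)))
  rw [sub_self] at hsub
  rw [psiCaputoLeft, ← hsub]
  congr 1
  refine intervalIntegral.integral_congr_Ioo_of_le hat fun τ hτ => ?_
  have hpos : 0 < ψ τ - ψ a :=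
    sub_pos.2 (hmono (left_mem_Icc.2 hat) (Ioo_subset_Icc_self hτ) hτ.1)
  have hderiv : HasDerivAt (fun s => w (ψ s - ψ a)) (w' (ψ τ - ψ a) * deriv ψ τ) τ :=
    (hw _ hpos).comp τ ((hψ_deriv τ hτ).sub_const (ψ a))
  rw [hderiv.deriv, Function.comp_apply, sub_sub_sub_cancel_right, mul_assoc]

theorem caputo_left_mittagLeffler_general (a b α lam : ℝ) (ψ : ℝ → ℝ)
    (hψ : ContDiffOn ℝ 1 ψ (Set.Icc a b))
    (hmono : StrictMonoOn ψ (Set.Icc a b))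
    (hα : α ∈ Set.Ioo (0 : ℝ) 1) :
    ∀ t ∈ Set.Ioc a b,
      psiCaputoLeft a α ψ (fun s => mittagLeffler α (lam * (ψ s - ψ a) ^ α)) t =
        lam * mittagLeffler α (lam * (ψ t - ψ a) ^ α) := by
  rintro t ⟨hat, htb⟩
  have hsub : Icc a t ⊆ Icc a b := Icc_subset_Icc_right htb
  have hU : 0 < ψ t - ψ a :=
    sub_pos.2 (hmono (left_mem_Icc.2 (hat.le.trans htb)) ⟨hat.le, htb⟩ hat)
  refine (psiCaputoLeft_comp_sub hat.le (hψ.continuousOn.mono hsub)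
    ((hψ.differentiableOn one_ne_zero).mono (Ioo_subset_Icc_self.trans hsub)) (hmono.mono hsub)
    fun u hu => hasDerivAt_mittagLeffler_mul_rpow hα.1 hα.2 lam hu).trans ?_
  rw [integral_sub_rpow_neg_mul_tsum hα.1 hα.2 lam hU]
  field_simp [(Gamma_pos_of_pos (sub_pos.2 hα.2)).ne']

theorem caputo_left_mittagLeffler (a b α lam : ℝ) (ψ : ℝ → ℝ) (hab : a < b)
    (hψ : ContDiffOn ℝ 1 ψ (Set.Icc a b))
    (hmono : StrictMonoOn ψ (Set.Icc a b))
    (hψ' : ∀ t ∈ Set.Icc a b, deriv ψ t ≠ 0)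
    (hα : α ∈ Set.Ioo (0 : ℝ) 1) :
    ∀ t ∈ Set.Ioc a b,
      psiCaputoLeft a α ψ (fun s => mittagLeffler α (lam * (ψ s - ψ a) ^ α)) t =
        lam * mittagLeffler α (lam * (ψ t - ψ a) ^ α) :=
  caputo_left_mittagLeffler_general a b α lam ψ hψ hmono hα
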